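/- Let φ : [0, ∞) → [0, ∞) be a nonincreasing function and let C > 0, α > 0, β > 1 and k₀ ≥ 0 be constants such that φ(h) ≤ C φ(k)^β / (h − k)^α whenever h > k > k₀. Then φ(k₀ + d) = 0, where d > 0 is defined by d^α = C 2^{αβ/(β−1)} φ(k₀)^{β−1}. -/
import Mathlib


open MeasureTheory Real Filter
open scoped RealInnerProductSpace Topology ENNReal NNReal

noncomputable section

/-- Euclidean space `ℝ^N`. -/
abbrev En (N : ℕ) : Type := EuclideanSpace ℝ (Fin N)

/-- `F : ℝ^N → [0,∞)` is a Finsler norm with ellipticity constants `a ≤ b`, `l ≤ L`: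
convex, `C²` away from the origin, absolutely 1-homogeneous, positive away from `0`,
comparable to the Euclidean norm, and with uniformly elliptic Hessian on directions
orthogonal to the radial one. -/
def IsFinslerNorm {N : ℕ} (F : En N → ℝ) (a b l L : ℝ) : Prop :=
  ConvexOn ℝ Set.univ F ∧
  ContDiffOn ℝ 2 F {(0 : En N)}ᶜ ∧
  (∀ (t : ℝ) (ξ : En N), F (t • ξ) = |t| * F ξ) ∧
  (∀ ξ : En N, 0 ≤ F ξ) ∧
  (∀ ξ : En N, ξ ≠ 0 → 0 < F ξ) ∧
  0 < a ∧ a ≤ b ∧ 0 < l ∧ l ≤ L ∧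
  (∀ ξ : En N, a * ‖ξ‖ ≤ F ξ ∧ F ξ ≤ b * ‖ξ‖) ∧
  (∀ ξ : En N, ξ ≠ 0 → ∀ V : En N, ⟪V, ξ⟫ = 0 →
    l ^ 2 * ‖V‖ ^ 2 ≤ ⟪fderiv ℝ (gradient F) ξ V, V⟫ ∧
    ⟪fderiv ℝ (gradient F) ξ V, V⟫ ≤ L * ‖V‖ ^ 2)

/-- The support function `F⁰(x) = sup {⟨x, ξ⟩ : F(ξ) < 1}`. -/
def polarF {N : ℕ} (F : En N → ℝ) (x : En N) : ℝ :=
  sSup ((fun ξ => ⟪x, ξ⟫) '' {ξ : En N | F ξ < 1})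

/-- A smooth test function compactly supported in `Ω`. -/
def IsTestFun {N : ℕ} (Ω : Set (En N)) (φ : En N → ℝ) : Prop :=
  ContDiff ℝ (⊤ : ℕ∞) φ ∧ HasCompactSupport φ ∧ tsupport φ ⊆ Ω

/-- `u` is a weak solution of `−Qu = f` in `Ω`, where `Qu = div(F(∇u)∇F(∇u))`. -/
def IsWeakSol {N : ℕ} (Ω : Set (En N)) (F u f : En N → ℝ) : Prop :=
  ∀ φ : En N → ℝ, IsTestFun Ω φ →
    ∫ x in Ω, F (gradient u x) * ⟪gradient F (gradient u x), gradient φ x⟫ =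
    ∫ x in Ω, f x * φ x

/-- The stability inequality for the linearization of `−Qu = f` (with `f`
standing for `∂_u f(x, u(x))`) tested against `φ`. -/
def StableIneq {N : ℕ} (Ω : Set (En N)) (F u f : En N → ℝ) (φ : En N → ℝ) : Prop :=
  0 ≤ ∫ x in Ω,
      (⟪gradient F (gradient u x), gradient φ x⟫ ^ 2
        + F (gradient u x) *
            ⟪fderiv ℝ (gradient F) (gradient u x) (gradient φ x), gradient φ x⟫
        - f x * φ x ^ 2)

/-- `u` is stable: the stability inequality holds for all test functions in `Ω`. -/
def IsStable {N : ℕ} (Ω : Set (En N)) (F u f : En N → ℝ) : Prop :=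
  ∀ φ : En N → ℝ, IsTestFun Ω φ → StableIneq Ω F u f φ

/-- A solution of the Dirichlet problem `−Qu = λ e^u` in `Ω`, `u = 0` on `∂Ω`. -/
def IsDirichletSol {N : ℕ} (Ω : Set (En N)) (F : En N → ℝ) (lam : ℝ) (u : En N → ℝ) : Prop :=
  ContDiffOn ℝ 1 u Ω ∧ ContinuousOn u (closure Ω) ∧
  (∀ x ∈ frontier Ω, u x = 0) ∧
  IsWeakSol Ω F u (fun x => lam * Real.exp (u x))

/-- Minimality: `u ≤ v` for every supersolution `v` of the Dirichlet problem. -/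
def IsMinimal {N : ℕ} (Ω : Set (En N)) (F : En N → ℝ) (lam : ℝ) (u : En N → ℝ) : Prop :=
  ∀ v : En N → ℝ, ContDiffOn ℝ 1 v Ω → ContinuousOn v (closure Ω) →
    (∀ x ∈ frontier Ω, 0 ≤ v x) →
    (∀ φ : En N → ℝ, IsTestFun Ω φ → (∀ x, 0 ≤ φ x) →
      lam * ∫ x in Ω, Real.exp (v x) * φ x ≤
      ∫ x in Ω, F (gradient v x) * ⟪gradient F (gradient v x), gradient φ x⟫) →
    ∀ x ∈ Ω, u x ≤ v x

/-- A bounded domain: open, connected and bounded. -/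
def IsBoundedDomain {N : ℕ} (Ω : Set (En N)) : Prop :=
  IsOpen Ω ∧ IsConnected Ω ∧ Bornology.IsBounded Ω

/-- The Wulff ball `B_r(x₀) = {x : F⁰(x − x₀) < r}`. -/
def wulffBall {N : ℕ} (F : En N → ℝ) (x₀ : En N) (r : ℝ) : Set (En N) :=
  {x | polarF F (x - x₀) < r}

/-- Stampacchia's iteration lemma. -/
theorem stmt11 (φ : ℝ → ℝ) (hnn : ∀ t, 0 ≤ t → 0 ≤ φ t)
    (hmono : AntitoneOn φ (Set.Ici 0))
    (C α β k₀ : ℝ) (hC : 0 < C) (hα : 0 < α) (hβ : 1 < β) (hk₀ : 0 ≤ k₀)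
    (hiter : ∀ h k : ℝ, k₀ < k → k < h → φ h ≤ C * φ k ^ β / (h - k) ^ α)
    (d : ℝ) (hd : 0 < d)
    (hdef : d ^ α = C * 2 ^ (α * β / (β - 1)) * φ k₀ ^ (β - 1)) :
    φ (k₀ + d) = 0 := by
  have hkd : (0:ℝ) ≤ k₀ + d := by linarith
  have hnn' : 0 ≤ φ (k₀ + d) := hnn _ hkd
  rcases eq_or_lt_of_le (hnn k₀ hk₀) with h0 | hp
  · have hle := hmono (Set.mem_Ici.2 hk₀) (Set.mem_Ici.2 hkd) (by linarith)
    linarith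
  have hβ1 : (0:ℝ) < β - 1 := by linarith
  set p := φ k₀ with hpdef
  set μ := α / (β - 1) with hμdef
  have hμ : 0 < μ := div_pos hα hβ1
  have two_pos : (0:ℝ) < 2 := by norm_num
  have key : ∀ n : ℕ, ∀ h : ℝ, k₀ + d - d * 2 ^ (-(n:ℝ)) < h →
      φ h ≤ p * 2 ^ (-(n:ℝ) * μ) := by
    intro n
    induction n with
    | zero =>
      intro h hh
      simp only [Nat.cast_zero, neg_zero, Real.rpow_zero, mul_one, zero_mul] at hh ⊢
      exact hmono (Set.mem_Ici.2 hk₀) (Set.mem_Ici.2 (by linarith)) (by linarith)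
    | succ n ih =>
      intro h hh
      push_cast at hh ⊢
      set k := h - d * 2 ^ (-((n:ℝ)+1)) with hkdef
      have h2pos : (0:ℝ) < 2 ^ (-((n:ℝ)+1)) := Real.rpow_pos_of_pos two_pos _
      have h2n : (2:ℝ) ^ (-(n:ℝ)) = 2 * 2 ^ (-((n:ℝ)+1)) := by
        rw [show (-(n:ℝ)) = 1 + (-((n:ℝ)+1)) by ring, Real.rpow_add two_pos,
          Real.rpow_one]
      have h2le1 : (2:ℝ) ^ (-(n:ℝ)) ≤ 1 :=
        Real.rpow_le_one_of_one_le_of_nonpos (by norm_num)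
          (neg_nonpos.2 (Nat.cast_nonneg n))
      have hkgt : k₀ + d - d * 2 ^ (-(n:ℝ)) < k := by
        rw [hkdef, h2n]; nlinarith
      have hkk₀ : k₀ < k := by nlinarith
      have hhk : k < h := by
        rw [hkdef]; nlinarith
      have h1 := hiter h k hkk₀ hhk
      have hφk : φ k ≤ p * 2 ^ (-(n:ℝ) * μ) := ih k hkgt
      have hφknn : 0 ≤ φ k := hnn k (by linarith)
      have hhk' : h - k = d * 2 ^ (-((n:ℝ)+1)) := by rw [hkdef]; ring
      have h2 : C * φ k ^ β / (h - k) ^ α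
          ≤ C * (p * 2 ^ (-(n:ℝ) * μ)) ^ β / (d * 2 ^ (-((n:ℝ)+1))) ^ α := by
        rw [hhk']
        gcongr
      have heq : C * (p * 2 ^ (-(n:ℝ) * μ)) ^ β / (d * 2 ^ (-((n:ℝ)+1))) ^ α
          = p * 2 ^ (-((n:ℝ)+1) * μ) := by
        rw [Real.mul_rpow hp.le (Real.rpow_nonneg (by norm_num) _),
          Real.mul_rpow hd.le (Real.rpow_nonneg (by norm_num) _),
          ← Real.rpow_mul (by norm_num : (0:ℝ) ≤ 2),
          ← Real.rpow_mul (by norm_num : (0:ℝ) ≤ 2), hdef]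
        have hpβ : p ^ (β-1) * p = p ^ β := by
          rw [← Real.rpow_add_one hp.ne']; norm_num
        have h2e : (2:ℝ) ^ (-(n:ℝ)*μ*β)
            = 2 ^ (α*β/(β-1)) * 2 ^ (-((n:ℝ)+1)*α) * 2 ^ (-((n:ℝ)+1)*μ) := by
          rw [← Real.rpow_add two_pos, ← Real.rpow_add two_pos]
          congr 1
          rw [hμdef]
          field_simp
          ring
        rw [h2e, ← hpβ]
        have hne1 : (2:ℝ) ^ (α*β/(β-1)) ≠ 0 := (Real.rpow_pos_of_pos two_pos _).ne'
        have hne2 : (2:ℝ) ^ (-((n:ℝ)+1)*α) ≠ 0 := (Real.rpow_pos_of_pos two_pos _).ne'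
        have hne3 : p ^ (β-1) ≠ 0 := (Real.rpow_pos_of_pos hp _).ne'
        field_simp
      calc φ h ≤ C * φ k ^ β / (h - k) ^ α := h1
        _ ≤ _ := h2
        _ = _ := heq
  have hb : ∀ n : ℕ, φ (k₀ + d) ≤ p * 2 ^ (-(n:ℝ) * μ) := by
    intro n
    apply key n
    have : (0:ℝ) < d * 2 ^ (-(n:ℝ)) := by positivity
    linarith
  have htend : Tendsto (fun n : ℕ => p * 2 ^ (-(n:ℝ) * μ)) atTop (𝓝 0) := by
    have hlt1 : (2:ℝ) ^ (-μ) < 1 :=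
      Real.rpow_lt_one_of_one_lt_of_neg (by norm_num) (by linarith)
    have hnneg : (0:ℝ) ≤ 2 ^ (-μ) := Real.rpow_nonneg (by norm_num) _
    have h0 : Tendsto (fun n : ℕ => p * ((2:ℝ) ^ (-μ)) ^ n) atTop (𝓝 (p * 0)) :=
      (tendsto_pow_atTop_nhds_zero_of_lt_one hnneg hlt1).const_mul p
    rw [mul_zero] at h0
    refine h0.congr (fun n => ?_)
    rw [← Real.rpow_natCast ((2:ℝ) ^ (-μ)) n, ← Real.rpow_mul (by norm_num : (0:ℝ) ≤ 2)]
    ring_nf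
  have hle0 : φ (k₀ + d) ≤ 0 := ge_of_tendsto' htend hb
  linarith
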